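/- Embed the upper half-plane in ℍ³ as ℍ²₀ = {x + y·j : x ∈ ℝ, y > 0}, and let F = {z ∈ ℍ³ : x(z) ∈ convexHull{1, 2, 1+i} and ‖x(z) − 1‖² + y(z)² ≥ 2}. Let γ₀ = [[i, −2i],[0, −i]] ∈ SL(2,ℂ) (the conjugate T₁·diag(i,−i)·T₁⁻¹ with T₁ = [[1,1],[0,1]]). Then {x + y·j : 0 ≤ x ≤ 2, (x − 1)² + y² ≥ 2} = (F ∪ γ₀·F) ∩ ℍ²₀. -/

import Mathlib

noncomputable section
open Matrix Complex

abbrev M2 := Matrix (Fin 2) (Fin 2) ℂ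
abbrev M3 := Matrix (Fin 3) (Fin 3) ℂ

/-- The explicit coordinate expression of the conjugation morphism `c`. -/
def cmap (g : M2) : M3 :=
  !![(g 0 0 ^ 2 - g 1 0 ^ 2 + g 1 1 ^ 2 - g 0 1 ^ 2) / 2,
       Complex.I * (g 0 0 ^ 2 - g 1 0 ^ 2 + g 0 1 ^ 2 - g 1 1 ^ 2) / 2,
       g 1 0 * g 1 1 - g 0 0 * g 0 1;
     Complex.I * (g 0 1 ^ 2 + g 1 1 ^ 2 - g 0 0 ^ 2 - g 1 0 ^ 2) / 2,
       (g 0 0 ^ 2 + g 1 0 ^ 2 + g 0 1 ^ 2 + g 1 1 ^ 2) / 2,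
       Complex.I * (g 0 0 * g 0 1 + g 1 0 * g 1 1);
     -(g 0 0 * g 1 0) + g 0 1 * g 1 1,
       Complex.I * (g 0 0 * g 1 0 + g 0 1 * g 1 1),
       g 0 0 * g 1 1 + g 0 1 * g 1 0]

/-- `z` is a Gaussian integer. -/
def IsGI (z : ℂ) : Prop := ∃ a b : ℤ, z = (a : ℂ) + (b : ℂ) * Complex.I

/-- `SO(3,ℂ)`: complex orthogonal matrices of determinant one. -/
def SO3C : Set M3 := {M | Mᵀ * M = 1 ∧ M.det = 1}

/-- `SO(3,ℤ[i])`: elements of `SO(3,ℂ)` with Gaussian-integer entries. -/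
def SO3ZI : Set M3 := {M | M ∈ SO3C ∧ ∀ i j, IsGI (M i j)}

/-- `Γ* = c⁻¹(SO(3,ℤ[i]))` inside `SL(2,ℂ)`. -/
def GammaStar : Set M2 := {g | g.det = 1 ∧ cmap g ∈ SO3ZI}

/-- Embedding of `ℂ` into the quaternions. -/
def qc (z : ℂ) : Quaternion ℝ := ⟨z.re, z.im, 0, 0⟩

/-- The quaternion `x + y·j` attached to the point `(x, y) ∈ ℂ × ℝ`. -/
def pt (p : ℂ × ℝ) : Quaternion ℝ := ⟨p.1.re, p.1.im, p.2, 0⟩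

/-- The upper half-space model `ℍ³`, as pairs `(x, y) ∈ ℂ × ℝ` with `y > 0`. -/
def H3 : Set (ℂ × ℝ) := {p | 0 < p.2}

/-- Action of `SL(2,ℂ)` on `ℍ³` by fractional linear transformations
`g·z = (az + b)(cz + d)⁻¹` (quaternion multiplication), in the coordinates
`z = (x(z), y(z))`. -/
def act3 (g : M2) (p : ℂ × ℝ) : ℂ × ℝ :=
  let q := (qc (g 0 0) * pt p + qc (g 0 1)) * (qc (g 1 0) * pt p + qc (g 1 1))⁻¹
  (⟨q.re, q.imI⟩, q.imJ)

/-- The good Grenier fundamental domain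
`F = {z ∈ ℍ³ : x(z) ∈ convexHull{1,2,1+i}, ‖x(z)−1‖² + y(z)² ≥ 2}` for `Γ*`. -/
def Fdom : Set (ℂ × ℝ) :=
  {p | p ∈ H3 ∧ p.1 ∈ convexHull ℝ ({1, 2, 1 + Complex.I} : Set ℂ) ∧
    2 ≤ Complex.normSq (p.1 - 1) + p.2 ^ 2}

/-- The upper half-plane `ℍ²₀ = {x + y·j : x ∈ ℝ, y > 0}` embedded in `ℍ³`. -/
def H20 : Set (ℂ × ℝ) := {p | p.1.im = 0 ∧ 0 < p.2}

/-- `γ₀ = T₁·diag(i,−i)·T₁⁻¹ = [[i, −2i],[0, −i]]`. -/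
def gamma0 : M2 := !![Complex.I, -2 * Complex.I; 0, -Complex.I]

/- On the real slice `ℍ²₀`, `F` is the region `1 ≤ x ≤ 2` outside the circle `(x - 1)² + y² = 2`,
and `γ₀` acts as the reflection `x ↦ 2 - x`. The reflected region is `0 ≤ x ≤ 1` outside the same
circle, and the two halves glue along `x = 1`. -/

lemma inv_qc_neg_I : (qc (-I))⁻¹ = qc I := by
  apply inv_eq_of_mul_eq_one_right
  ext <;> simp only [Quaternion.re_mul, Quaternion.imI_mul, Quaternion.imJ_mul,
    Quaternion.imK_mul] <;> simp [qc, Quaternion.re_one, Quaternion.imI_one, Quaternion.imJ_one,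
    Quaternion.imK_one]

lemma qc_zero : qc 0 = 0 := by
  ext <;> simp [qc] <;> rfl

-- `γ₀·z = (iz − 2i)·i = izi + 2`, and `z ↦ izi` sends `x + yj` to `−x + yj`.
lemma act3_gamma0 (p : ℂ × ℝ) : act3 gamma0 p = (2 - p.1, p.2) := by
  simp only [act3, gamma0, of_apply, cons_val', cons_val_zero, cons_val_one, empty_val',
    cons_val_fin_one, qc_zero, zero_mul, zero_add, inv_qc_neg_I]
  refine Prod.ext (Complex.ext ?_ ?_) ?_ <;>
    simp only [Quaternion.re_mul, Quaternion.imI_mul, Quaternion.imJ_mul, Quaternion.imK_mul,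
      Quaternion.re_add, Quaternion.imI_add, Quaternion.imJ_add, Quaternion.imK_add] <;>
    simp [qc, pt, ← sub_eq_add_neg]

lemma act3_gamma0_involutive : Function.Involutive (act3 gamma0) := fun p => by
  simp [act3_gamma0]

lemma image_act3_gamma0 (s : Set (ℂ × ℝ)) : act3 gamma0 '' s = act3 gamma0 ⁻¹' s :=
  congrFun (Set.image_eq_preimage_of_inverse act3_gamma0_involutive act3_gamma0_involutive) s

lemma mem_convexHull_triangle_iff_of_im_eq_zero {z : ℂ} (hz : z.im = 0) :
    z ∈ convexHull ℝ ({1, 2, 1 + I} : Set ℂ) ↔ 1 ≤ z.re ∧ z.re ≤ 2 := by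
  constructor
  · refine fun h => convexHull_min ?_ ((convex_halfSpace_re_ge 1).inter
      (convex_halfSpace_re_le 2)) h
    rintro w (rfl | rfl | rfl) <;> norm_num
  · rintro ⟨h1, h2⟩
    refine segment_subset_convexHull (x := 1) (y := 2) (by simp) (by simp)
      ⟨2 - z.re, z.re - 1, by linarith, by linarith, by ring, ?_⟩
    apply Complex.ext
    · simp only [Complex.add_re, Complex.real_smul, Complex.re_ofReal_mul, Complex.one_re,
        Complex.re_ofNat]
      ring
    · simp [hz]

lemma mem_Fdom_iff_of_im_eq_zero {p : ℂ × ℝ} (hp : p.1.im = 0) :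
    p ∈ Fdom ↔ 0 < p.2 ∧ 1 ≤ p.1.re ∧ p.1.re ≤ 2 ∧ 2 ≤ (p.1.re - 1) ^ 2 + p.2 ^ 2 := by
  simp [Fdom, H3, mem_convexHull_triangle_iff_of_im_eq_zero hp, Complex.normSq_apply, hp,
    and_assoc, sq]

lemma act3_gamma0_mem_Fdom_iff_of_im_eq_zero {p : ℂ × ℝ} (hp : p.1.im = 0) :
    act3 gamma0 p ∈ Fdom ↔
      0 < p.2 ∧ 0 ≤ p.1.re ∧ p.1.re ≤ 1 ∧ 2 ≤ (p.1.re - 1) ^ 2 + p.2 ^ 2 := by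
  rw [act3_gamma0, mem_Fdom_iff_of_im_eq_zero (by simp [hp])]
  simp only [Complex.sub_re, Complex.re_ofNat,
    show (2 - p.1.re - 1) ^ 2 = (p.1.re - 1) ^ 2 by ring]
  constructor <;> rintro ⟨hy, h1, h2, hr⟩ <;> exact ⟨hy, by linarith, by linarith, hr⟩

/-- `{x + y·j : 0 ≤ x ≤ 2, (x−1)² + y² ≥ 2} = (F ∪ γ₀·F) ∩ ℍ²₀`. -/
theorem stmt19 :
    {p : ℂ × ℝ | p.1.im = 0 ∧ 0 < p.2 ∧ 0 ≤ p.1.re ∧ p.1.re ≤ 2 ∧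
        2 ≤ (p.1.re - 1) ^ 2 + p.2 ^ 2} =
      (Fdom ∪ act3 gamma0 '' Fdom) ∩ H20 := by
  ext p
  rw [image_act3_gamma0]
  simp only [H20, Set.mem_inter_iff, Set.mem_union, Set.mem_preimage, Set.mem_ofPred_eq]
  constructor
  · rintro ⟨hx, hy, h0, h2, hr⟩
    refine ⟨?_, hx, hy⟩
    rw [mem_Fdom_iff_of_im_eq_zero hx, act3_gamma0_mem_Fdom_iff_of_im_eq_zero hx]
    rcases le_total 1 p.1.re with h1 | h1
    · exact Or.inl ⟨hy, h1, h2, hr⟩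
    · exact Or.inr ⟨hy, h0, h1, hr⟩
  · rintro ⟨h, hx, hy⟩
    rw [mem_Fdom_iff_of_im_eq_zero hx, act3_gamma0_mem_Fdom_iff_of_im_eq_zero hx] at h
    rcases h with ⟨-, h1, h2, hr⟩ | ⟨-, h0, h1, hr⟩
    · exact ⟨hx, hy, by linarith, h2, hr⟩
    · exact ⟨hx, hy, h0, by linarith, hr⟩
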